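/- arXiv:math/0209350 — 4 statements merged into one kernel-verified Lean document; each statement's English description precedes it below -/
import Mathlib

section
/- Let R_0 be a commutative ring, let n ≥ 2, and let C_{n} be the (n) × (n+2) tridiagonal matrix over R_0 = K[X,Y] whose i-th row has entries 2X², 2XY, Y² in columns i, i+1, i+2 and zeros elsewhere. Then for each i with 1 ≤ i ≤ n, the vectors X^{i+1}·e_i and Y^{i+1}·e_{n+1−i} lie in the column space of C_n, where e_1,...,e_n is the standard basis of K[X,Y]^n. -/
open MvPolynomial

noncomputable section

/-- The `n × (n+2)` tridiagonal matrix over `K[X,Y]` whose `i`-th row has entries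
`2X², 2XY, Y²` in columns `i, i+1, i+2` and zeros elsewhere. -/
def matC (K : Type*) [Field K] (n : ℕ) :
    Matrix (Fin n) (Fin (n + 2)) (MvPolynomial (Fin 2) K) :=
  fun i j =>
    if (j : ℕ) = (i : ℕ) then 2 * X 0 ^ 2
    else if (j : ℕ) = (i : ℕ) + 1 then 2 * X 0 * X 1
    else if (j : ℕ) = (i : ℕ) + 2 then X 1 ^ 2
    else 0

namespace Aux13

variable {K : Type*} [Field K] [CharZero K] {n : ℕ}

/-- The column span of `matC`. -/
def S (K : Type*) [Field K] (n : ℕ) :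
    Submodule (MvPolynomial (Fin 2) K) (Fin n → MvPolynomial (Fin 2) K) :=
  Submodule.span (MvPolynomial (Fin 2) K)
    (Set.range fun j : Fin (n + 2) => fun i' : Fin n => matC K n i' j)

lemma col_mem (j : Fin (n + 2)) : (fun i' : Fin n => matC K n i' j) ∈ S K n :=
  Submodule.subset_span ⟨j, rfl⟩

lemma half_mem {v : Fin n → MvPolynomial (Fin 2) K}
    (h : (2 : MvPolynomial (Fin 2) K) • v ∈ S K n) : v ∈ S K n := by
  have h2 := (S K n).smul_mem (C ((2 : K)⁻¹)) h
  rwa [smul_smul, show (C ((2 : K)⁻¹) * 2 : MvPolynomial (Fin 2) K) = 1 by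
      rw [← map_ofNat (C : K →+* MvPolynomial (Fin 2) K) 2, ← C_mul]
      norm_num,
    one_smul] at h2

lemma Plem : ∀ k : ℕ, ∀ hk : k < n,
    (X 0 : MvPolynomial (Fin 2) K) ^ (k + 2) •
      (Pi.single (⟨k, hk⟩ : Fin n) 1 : Fin n → MvPolynomial (Fin 2) K) ∈ S K n := by
  intro k
  induction k using Nat.strong_induction_on with
  | _ k ih =>
    match k with
    | 0 =>
      intro hk
      apply half_mem
      have key : (2 : MvPolynomial (Fin 2) K) •
          ((X 0 : MvPolynomial (Fin 2) K) ^ 2 •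
            (Pi.single (⟨0, hk⟩ : Fin n) 1 : Fin n → MvPolynomial (Fin 2) K)) =
          (fun i' : Fin n => matC K n i' ⟨0, by omega⟩) := by
        funext i'
        simp only [Pi.smul_apply, smul_eq_mul, Pi.single_apply, matC, Fin.ext_iff]
        split_ifs <;> first | ring1 | (exfalso; first | assumption | omega)
      rw [key]; exact col_mem _
    | 1 =>
      intro hk
      have h0 := ih 0 (by omega) (by omega)
      apply half_mem
      have key : (2 : MvPolynomial (Fin 2) K) •
          ((X 0 : MvPolynomial (Fin 2) K) ^ 3 •
            (Pi.single (⟨1, hk⟩ : Fin n) 1 : Fin n → MvPolynomial (Fin 2) K)) =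
          (X 0 : MvPolynomial (Fin 2) K) • (fun i' : Fin n => matC K n i' ⟨1, by omega⟩)
          - (2 * X 1 : MvPolynomial (Fin 2) K) •
            ((X 0 : MvPolynomial (Fin 2) K) ^ 2 •
              (Pi.single (⟨0, by omega⟩ : Fin n) 1 : Fin n → MvPolynomial (Fin 2) K)) := by
        funext i'
        simp only [Pi.smul_apply, smul_eq_mul, Pi.single_apply, Pi.sub_apply, matC, Fin.ext_iff]
        split_ifs <;> first | ring1 | (exfalso; first | assumption | omega)
      rw [key]
      exact Submodule.sub_mem _ ((S K n).smul_mem _ (col_mem _)) ((S K n).smul_mem _ h0)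
    | (m + 2) =>
      intro hk
      have h1 := ih (m + 1) (by omega) (by omega)
      have h0 := ih m (by omega) (by omega)
      apply half_mem
      have key : (2 : MvPolynomial (Fin 2) K) •
          ((X 0 : MvPolynomial (Fin 2) K) ^ (m + 2 + 2) •
            (Pi.single (⟨m + 2, hk⟩ : Fin n) 1 : Fin n → MvPolynomial (Fin 2) K)) =
          (X 0 : MvPolynomial (Fin 2) K) ^ (m + 2) •
            (fun i' : Fin n => matC K n i' ⟨m + 2, by omega⟩)
          - (2 * X 1 : MvPolynomial (Fin 2) K) •
            ((X 0 : MvPolynomial (Fin 2) K) ^ (m + 1 + 2) •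
              (Pi.single (⟨m + 1, by omega⟩ : Fin n) 1 : Fin n → MvPolynomial (Fin 2) K))
          - (X 1 ^ 2 : MvPolynomial (Fin 2) K) •
            ((X 0 : MvPolynomial (Fin 2) K) ^ (m + 2) •
              (Pi.single (⟨m, by omega⟩ : Fin n) 1 : Fin n → MvPolynomial (Fin 2) K)) := by
        funext i'
        simp only [Pi.smul_apply, smul_eq_mul, Pi.single_apply, Pi.sub_apply, matC, Fin.ext_iff]
        split_ifs <;> first | ring1 | (exfalso; first | assumption | omega)
      rw [key]
      exact Submodule.sub_mem _
        (Submodule.sub_mem _ ((S K n).smul_mem _ (col_mem _)) ((S K n).smul_mem _ h1))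
        ((S K n).smul_mem _ h0)

lemma Qlem : ∀ k : ℕ, ∀ hk : k < n,
    (X 1 : MvPolynomial (Fin 2) K) ^ (k + 2) •
      (Pi.single (⟨n - 1 - k, by omega⟩ : Fin n) 1 : Fin n → MvPolynomial (Fin 2) K) ∈ S K n := by
  intro k
  induction k using Nat.strong_induction_on with
  | _ k ih =>
    match k with
    | 0 =>
      intro hk
      have key : ((X 1 : MvPolynomial (Fin 2) K) ^ 2 •
            (Pi.single (⟨n - 1 - 0, by omega⟩ : Fin n) 1 : Fin n → MvPolynomial (Fin 2) K)) =
          (fun i' : Fin n => matC K n i' ⟨n + 1, by omega⟩) := by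
        funext i'
        simp only [Pi.smul_apply, smul_eq_mul, Pi.single_apply, matC, Fin.ext_iff]
        have := i'.isLt
        split_ifs <;> first | ring1 | (exfalso; first | assumption | omega)
      rw [key]; exact col_mem _
    | 1 =>
      intro hk
      have h0 := ih 0 (by omega) (by omega)
      have key : ((X 1 : MvPolynomial (Fin 2) K) ^ 3 •
            (Pi.single (⟨n - 1 - 1, by omega⟩ : Fin n) 1 : Fin n → MvPolynomial (Fin 2) K)) =
          (X 1 : MvPolynomial (Fin 2) K) • (fun i' : Fin n => matC K n i' ⟨n, by omega⟩)
          - (2 * X 0 : MvPolynomial (Fin 2) K) •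
            ((X 1 : MvPolynomial (Fin 2) K) ^ 2 •
              (Pi.single (⟨n - 1 - 0, by omega⟩ : Fin n) 1 : Fin n → MvPolynomial (Fin 2) K)) := by
        funext i'
        simp only [Pi.smul_apply, smul_eq_mul, Pi.single_apply, Pi.sub_apply, matC, Fin.ext_iff]
        have := i'.isLt
        split_ifs <;> first | ring1 | (exfalso; first | assumption | omega)
      rw [key]
      exact Submodule.sub_mem _ ((S K n).smul_mem _ (col_mem _)) ((S K n).smul_mem _ h0)
    | (m + 2) =>
      intro hk
      have h1 := ih (m + 1) (by omega) (by omega)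
      have h0 := ih m (by omega) (by omega)
      have key : ((X 1 : MvPolynomial (Fin 2) K) ^ (m + 2 + 2) •
            (Pi.single (⟨n - 1 - (m + 2), by omega⟩ : Fin n) 1 :
              Fin n → MvPolynomial (Fin 2) K)) =
          (X 1 : MvPolynomial (Fin 2) K) ^ (m + 2) •
            (fun i' : Fin n => matC K n i' ⟨n - m - 1, by omega⟩)
          - (2 * X 0 : MvPolynomial (Fin 2) K) •
            ((X 1 : MvPolynomial (Fin 2) K) ^ (m + 1 + 2) •
              (Pi.single (⟨n - 1 - (m + 1), by omega⟩ : Fin n) 1 :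
                Fin n → MvPolynomial (Fin 2) K))
          - (2 * X 0 ^ 2 : MvPolynomial (Fin 2) K) •
            ((X 1 : MvPolynomial (Fin 2) K) ^ (m + 2) •
              (Pi.single (⟨n - 1 - m, by omega⟩ : Fin n) 1 :
                Fin n → MvPolynomial (Fin 2) K)) := by
        funext i'
        simp only [Pi.smul_apply, smul_eq_mul, Pi.single_apply, Pi.sub_apply, matC, Fin.ext_iff]
        have := i'.isLt
        split_ifs <;> first | ring1 | (exfalso; first | assumption | omega)
      rw [key]
      exact Submodule.sub_mem _
        (Submodule.sub_mem _ ((S K n).smul_mem _ (col_mem _)) ((S K n).smul_mem _ h1))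
        ((S K n).smul_mem _ h0)

end Aux13

theorem stmt_13 (K : Type*) [Field K] [CharZero K] (n : ℕ) (hn : 2 ≤ n) :
    ∀ i : Fin n,
      ((X 0 : MvPolynomial (Fin 2) K) ^ ((i : ℕ) + 2) •
          (Pi.single i 1 : Fin n → MvPolynomial (Fin 2) K) ∈
        Submodule.span (MvPolynomial (Fin 2) K)
          (Set.range fun j : Fin (n + 2) => fun i' : Fin n => matC K n i' j)) ∧
      ((X 1 : MvPolynomial (Fin 2) K) ^ ((i : ℕ) + 2) •
          (Pi.single (Fin.rev i) 1 : Fin n → MvPolynomial (Fin 2) K) ∈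
        Submodule.span (MvPolynomial (Fin 2) K)
          (Set.range fun j : Fin (n + 2) => fun i' : Fin n => matC K n i' j)) := by
  intro i
  constructor
  · have h := Aux13.Plem (K := K) (n := n) i.val i.isLt
    simpa [Aux13.S] using h
  · have h := Aux13.Qlem (K := K) (n := n) i.val i.isLt
    have hrev : (⟨n - 1 - i.val, by omega⟩ : Fin n) = Fin.rev i := by
      ext
      simp [Fin.val_rev]
      omega
    rw [hrev] at h
    simpa [Aux13.S] using h

end
end

section
/- Let n ≥ 1 and let C̃_n be the n × (n+2) rational tridiagonal matrix whose i-th row has entries 2, 2, 1 in columns i, i+1, i+2 and zeros elsewhere. Every submatrix of C̃_n formed by a set of consecutive columns has maximal rank (equal to the minimum of n and the number of chosen columns), except for the n × n submatrix obtained by deleting the first and last columns when n ≡ 3 (mod 4), which has rank n − 1. -/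
/-!
Extend a vector `x` indexed by the chosen columns `a, …, b` by zero to a sequence `X` on `ℕ`.
The submatrix kills `x` iff `2 X i + 2 X (i+1) + X (i+2) = 0` for `i < n`, and its transpose
kills `z` iff `Z j + 2 Z (j+1) + 2 Z (j+2) = 0` for the chosen `j`, where `Z` is `z` shifted by two.
Unless the columns are exactly `1, …, n`, one of these recurrences starts (or ends) with two
forced zeros, which propagate, so the submatrix or its transpose has trivial kernel.
For the columns `1, …, n`, `X` is `X 1` times the Lucas sequence `u` with
`u (k+2) = -2 u (k+1) - 2 u k`; since `u (k+4) = -4 u k`, the boundary condition `X (n+1) = 0`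
forces `X = 0` unless `4 ∣ n + 1`, in which case the kernel is spanned by `u`.
-/

/-- The `n × (n+2)` rational tridiagonal matrix whose `i`-th row has entries
`2, 2, 1` in columns `i, i+1, i+2` and zeros elsewhere. -/
def matCt (n : ℕ) : Matrix (Fin n) (Fin (n + 2)) ℚ :=
  fun i j =>
    if (j : ℕ) = (i : ℕ) then 2
    else if (j : ℕ) = (i : ℕ) + 1 then 2
    else if (j : ℕ) = (i : ℕ) + 2 then 1
    else 0

open Module

namespace Matrix

variable {m n K : Type*} [Fintype n] [Field K]

theorem rank_add_finrank_ker_mulVecLin (M : Matrix m n K) :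
    M.rank + finrank K (LinearMap.ker M.mulVecLin) = Fintype.card n := by
  rw [rank, LinearMap.finrank_range_add_finrank_ker, finrank_fintype_fun_eq_card]

theorem rank_eq_card_of_mulVec_eq_zero {M : Matrix m n K} (h : ∀ v, M *ᵥ v = 0 → v = 0) :
    M.rank = Fintype.card n := by
  have := M.rank_add_finrank_ker_mulVecLin
  rwa [ker_mulVecLin_eq_bot_iff.mpr h, finrank_bot, add_zero] at this

theorem rank_eq_card_sub_one_of_mulVec_eq_zero {M : Matrix m n K} {v : n → K} (hv : v ≠ 0) (hMv : M *ᵥ v = 0)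
    (h : ∀ w, M *ᵥ w = 0 → ∃ c : K, w = c • v) : M.rank = Fintype.card n - 1 := by
  have hker : LinearMap.ker M.mulVecLin = K ∙ v := by
    refine le_antisymm (fun w hw => ?_) ((Submodule.span_singleton_le_iff_mem _ _).mpr hMv)
    obtain ⟨c, rfl⟩ := h w hw
    exact Submodule.smul_mem _ c (Submodule.mem_span_singleton_self v)
  have := M.rank_add_finrank_ker_mulVecLin
  rw [hker, finrank_span_singleton hv] at this
  omega

end Matrix

-- `x` placed at positions `s, …, s + k - 1` and extended by zero; written as a sum so that it
-- comes straight out of `mulVec`.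
def shiftExtend {M : Type*} [AddCommMonoid M] {k : ℕ} (s : ℕ) (x : Fin k → M) (j : ℕ) : M :=
  ∑ t : Fin k, if s + (t : ℕ) = j then x t else 0

section shiftExtend

variable {M : Type*} [AddCommMonoid M] {k : ℕ} (s : ℕ) (x : Fin k → M)

@[simp]
theorem shiftExtend_add (t : Fin k) : shiftExtend s x (s + t) = x t := by
  simp [shiftExtend, Fin.val_inj]

theorem shiftExtend_of_lt {j : ℕ} (hj : j < s) : shiftExtend s x j = 0 :=
  Finset.sum_eq_zero fun t _ => if_neg (by omega)

theorem shiftExtend_of_le {j : ℕ} (hj : s + k ≤ j) : shiftExtend s x j = 0 :=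
  Finset.sum_eq_zero fun t _ => if_neg (by omega)

end shiftExtend

section Recurrence

variable {R : Type*} [CommRing R] [NoZeroDivisors R] {α β γ : R} {y : ℕ → R} {q : ℕ}

theorem eq_zero_of_recurrence (hγ : γ ≠ 0)
    (hrec : ∀ k, k + 2 ≤ q → α * y k + β * y (k + 1) + γ * y (k + 2) = 0)
    (h0 : y 0 = 0) (h1 : y 1 = 0) : ∀ k ≤ q, y k = 0
  | 0, _ => h0
  | 1, _ => h1
  | k + 2, hk => by
    have h := hrec k hk
    rw [eq_zero_of_recurrence hγ hrec h0 h1 k (by omega),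
      eq_zero_of_recurrence hγ hrec h0 h1 (k + 1) (by omega)] at h
    simpa [hγ] using h

theorem eq_zero_of_recurrence_of_final {p : ℕ} (hα : α ≠ 0)
    (hrec : ∀ k, p ≤ k → k < q → α * y k + β * y (k + 1) + γ * y (k + 2) = 0)
    (h0 : y q = 0) (h1 : y (q + 1) = 0) : ∀ k, p ≤ k → k ≤ q + 1 → y k = 0 := by
  have hrev := eq_zero_of_recurrence (y := fun j => y (q + 1 - j)) (q := q + 1 - p) (β := β)
    (α := γ) hα (fun k hk => by
      have h := hrec (q - 1 - k) (by omega) (by omega)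
      rw [show q + 1 - k = q - 1 - k + 2 by omega, show q + 1 - (k + 1) = q - 1 - k + 1 by omega,
        show q + 1 - (k + 2) = q - 1 - k by omega]
      linear_combination h) (by simpa using h1) (by simpa using h0)
  intro k hpk hkq
  simpa [show q + 1 - (q + 1 - k) = k by omega] using hrev (q + 1 - k) (by omega)

end Recurrence

def lucasU : ℕ → ℚ
  | 0 => 0
  | 1 => 1
  | k + 2 => -2 * lucasU (k + 1) - 2 * lucasU k

theorem lucasU_recurrence (k : ℕ) : 2 * lucasU k + 2 * lucasU (k + 1) + lucasU (k + 2) = 0 := by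
  rw [lucasU]; ring

theorem lucasU_add_four (k : ℕ) : lucasU (k + 4) = -4 * lucasU k := by
  simp only [lucasU]; ring

theorem lucasU_eq_zero_iff : ∀ k, lucasU k = 0 ↔ 4 ∣ k
  | 0 | 1 | 2 | 3 => by norm_num [lucasU]
  | k + 4 => by
    rw [lucasU_add_four, mul_eq_zero, lucasU_eq_zero_iff k, Nat.dvd_add_self_right]
    norm_num

theorem matCt_apply {n : ℕ} (i : Fin n) (j : Fin (n + 2)) :
    matCt n i j = (if (j : ℕ) = i then 2 else 0) + (if (j : ℕ) = i + 1 then 2 else 0) +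
      (if (j : ℕ) = i + 2 then 1 else 0) := by
  unfold matCt
  split_ifs <;> first | omega | norm_num

section Submatrix

open Matrix

variable {n k a : ℕ} {c : Fin k → Fin (n + 2)} (hc : ∀ t, (c t : ℕ) = a + t)
include hc

theorem matCt_submatrix_mulVec (x : Fin k → ℚ) (i : Fin n) :
    ((matCt n).submatrix id c *ᵥ x) i =
      2 * shiftExtend a x i + 2 * shiftExtend a x (i + 1) + shiftExtend a x (i + 2) := by
  simp only [mulVec, dotProduct, submatrix_apply, id_eq, matCt_apply, hc, shiftExtend,
    Finset.mul_sum, add_mul, ite_mul, zero_mul, mul_ite, mul_zero, one_mul, Finset.sum_add_distrib]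

theorem matCt_submatrix_transpose_mulVec (z : Fin n → ℚ) (t : Fin k) :
    (((matCt n).submatrix id c)ᵀ *ᵥ z) t = shiftExtend 2 z (a + t) +
      2 * shiftExtend 2 z (a + t + 1) + 2 * shiftExtend 2 z (a + t + 2) := by
  simp only [mulVec, dotProduct, transpose_apply, submatrix_apply, id_eq, matCt_apply, hc,
    shiftExtend, Finset.mul_sum, ← Finset.sum_add_distrib]
  refine Finset.sum_congr rfl fun i _ => ?_
  split_ifs <;> first | omega | ring

variable {x : Fin k → ℚ} {z : Fin n → ℚ}

theorem recurrence_of_matCt_submatrix_mulVec_eq_zero (hx : (matCt n).submatrix id c *ᵥ x = 0)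
    {j : ℕ} (hj : j < n) :
    2 * shiftExtend a x j + 2 * shiftExtend a x (j + 1) + 1 * shiftExtend a x (j + 2) = 0 := by
  simpa [matCt_submatrix_mulVec hc] using congrFun hx ⟨j, hj⟩

theorem recurrence_of_matCt_submatrix_transpose_mulVec_eq_zero
    (hz : ((matCt n).submatrix id c)ᵀ *ᵥ z = 0) {j : ℕ} (haj : a ≤ j) (hj : j < a + k) :
    1 * shiftExtend 2 z j + 2 * shiftExtend 2 z (j + 1) + 2 * shiftExtend 2 z (j + 2) = 0 := by
  have h := congrFun hz ⟨j - a, by omega⟩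
  rw [matCt_submatrix_transpose_mulVec hc] at h
  simpa [show a + (j - a) = j by omega] using h

theorem rank_matCt_submatrix_of_add_le (h : a + k ≤ n) :
    ((matCt n).submatrix id c).rank = k := by
  refine (rank_eq_card_of_mulVec_eq_zero fun x hx => funext fun t => ?_).trans (Fintype.card_fin k)
  have hzero := eq_zero_of_recurrence_of_final (y := shiftExtend a x) (p := 0) two_ne_zero
    (fun j _ hj => recurrence_of_matCt_submatrix_mulVec_eq_zero hc hx hj)
    (shiftExtend_of_le a x h) (shiftExtend_of_le a x (by omega))
  simpa using hzero (a + t) (Nat.zero_le _) (by omega)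

theorem rank_matCt_submatrix_of_two_le (h : 2 ≤ a) :
    ((matCt n).submatrix id c).rank = k := by
  refine (rank_eq_card_of_mulVec_eq_zero fun x hx => funext fun t => ?_).trans (Fintype.card_fin k)
  have hzero := eq_zero_of_recurrence (y := shiftExtend a x) (q := n + 1) one_ne_zero
    (fun j hj => recurrence_of_matCt_submatrix_mulVec_eq_zero hc hx (by omega))
    (shiftExtend_of_lt a x (by omega)) (shiftExtend_of_lt a x (by omega))
  simpa using hzero (a + t) (by have := hc t ▸ (c t).isLt; omega)

theorem rank_matCt_submatrix_of_eq_zero (ha : a = 0) (h : n ≤ k) :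
    ((matCt n).submatrix id c).rank = n := by
  rw [← rank_transpose]
  refine (rank_eq_card_of_mulVec_eq_zero fun z hz => funext fun i => ?_).trans (Fintype.card_fin n)
  have hzero := eq_zero_of_recurrence (y := shiftExtend 2 z) (q := n + 1) two_ne_zero
    (fun j hj => recurrence_of_matCt_submatrix_transpose_mulVec_eq_zero hc hz (by omega)
      (by omega)) (shiftExtend_of_lt 2 z (by omega)) (shiftExtend_of_lt 2 z (by omega))
  simpa using hzero (2 + i) (by omega)

theorem rank_matCt_submatrix_of_le_two (ha : a ≤ 2) (h : n + 2 ≤ a + k) :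
    ((matCt n).submatrix id c).rank = n := by
  rw [← rank_transpose]
  refine (rank_eq_card_of_mulVec_eq_zero fun z hz => funext fun i => ?_).trans (Fintype.card_fin n)
  have hzero := eq_zero_of_recurrence_of_final (y := shiftExtend 2 z) (q := a + k) one_ne_zero
    (fun j haj hj => recurrence_of_matCt_submatrix_transpose_mulVec_eq_zero hc hz haj hj)
    (shiftExtend_of_le 2 z (by omega)) (shiftExtend_of_le 2 z (by omega))
  simpa using hzero (2 + i) (by omega) (by omega)

theorem shiftExtend_eq_mul_lucasU (ha : a = 1) (hx : (matCt n).submatrix id c *ᵥ x = 0) :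
    ∀ j ≤ n + 1, shiftExtend a x j = shiftExtend a x 1 * lucasU j := by
  subst ha
  have hzero := eq_zero_of_recurrence (y := fun j => shiftExtend 1 x j - shiftExtend 1 x 1 * lucasU j)
    (α := 2) (β := 2) (q := n + 1) one_ne_zero
    (fun j hj => by
      linear_combination recurrence_of_matCt_submatrix_mulVec_eq_zero hc hx (j := j) (by omega) -
        shiftExtend 1 x 1 * lucasU_recurrence j)
    (by simp [shiftExtend_of_lt, lucasU]) (by simp [lucasU])
  intro j hj
  linear_combination hzero j hj

theorem rank_matCt_submatrix_of_mod_four_ne (ha : a = 1) (hk : k = n) (h4 : n % 4 ≠ 3) :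
    ((matCt n).submatrix id c).rank = k := by
  refine (rank_eq_card_of_mulVec_eq_zero fun x hx => funext fun t => ?_).trans (Fintype.card_fin k)
  have hX := shiftExtend_eq_mul_lucasU hc ha hx
  have hX1 : shiftExtend a x 1 = 0 := by
    have hlast := hX (n + 1) le_rfl
    rw [shiftExtend_of_le a x (by omega)] at hlast
    have hu : lucasU (n + 1) ≠ 0 := by rw [Ne, lucasU_eq_zero_iff]; omega
    simpa [hu] using hlast.symm
  simpa [hX1] using hX (a + t) (by omega)

theorem rank_matCt_submatrix_of_mod_four_eq (ha : a = 1) (hk : k = n) (h4 : n % 4 = 3) :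
    ((matCt n).submatrix id c).rank = k - 1 := by
  set v : Fin k → ℚ := fun t => lucasU (1 + t)
  have hv : ∀ j ≤ n + 1, shiftExtend a v j = lucasU j := by
    intro j hj
    subst ha
    obtain rfl | hj0 := Nat.eq_zero_or_pos j
    · exact shiftExtend_of_lt 1 v zero_lt_one
    obtain rfl | hjn := eq_or_lt_of_le hj
    · rw [shiftExtend_of_le 1 v (by omega), eq_comm, lucasU_eq_zero_iff]; omega
    simpa [v, show 1 + (j - 1) = j by omega] using shiftExtend_add 1 v ⟨j - 1, by omega⟩
  refine (rank_eq_card_sub_one_of_mulVec_eq_zero (v := v) (fun hv0 => ?_) (funext fun i => ?_) fun x hx => ?_).trans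
    (by rw [Fintype.card_fin])
  · simpa [v, lucasU] using congrFun hv0 ⟨0, by omega⟩
  · rw [matCt_submatrix_mulVec hc, hv i (by omega), hv (i + 1) (by omega), hv (i + 2) (by omega)]
    exact lucasU_recurrence i
  · refine ⟨shiftExtend a x 1, funext fun t => ?_⟩
    have hX := shiftExtend_eq_mul_lucasU hc ha hx
    subst ha
    simpa [v] using hX (1 + t) (by omega)

end Submatrix

/-- Lemma 3.1(ii): every submatrix of `C̃_n` formed by consecutive columns
`a, a+1, …, b` (zero-indexed) has maximal rank, except for the one obtained
by deleting the first and last columns when `n ≡ 3 (mod 4)`, which has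
rank `n - 1`. -/
theorem stmt_14 (n : ℕ) (a b : ℕ) (hab : a ≤ b) (hb : b < n + 2) :
    ((matCt n).submatrix id
        (fun t : Fin (b - a + 1) => (⟨a + (t : ℕ), by omega⟩ : Fin (n + 2)))).rank =
      if n % 4 = 3 ∧ a = 1 ∧ b = n then n - 1 else min n (b - a + 1) := by
  have hc : ∀ t : Fin (b - a + 1), ((⟨a + (t : ℕ), by omega⟩ : Fin (n + 2)) : ℕ) = a + t :=
    fun _ => rfl
  by_cases hsq : a = 1 ∧ b = n
  · obtain ⟨rfl, rfl⟩ := hsq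
    by_cases h4 : b % 4 = 3
    · rw [if_pos ⟨h4, rfl, rfl⟩, rank_matCt_submatrix_of_mod_four_eq hc rfl (by omega) h4]
      omega
    · rw [if_neg (by tauto), rank_matCt_submatrix_of_mod_four_ne hc rfl (by omega) h4]
      omega
  rw [if_neg (by tauto)]
  rcases lt_or_ge b n with hbn | hbn
  · rw [rank_matCt_submatrix_of_add_le hc (by omega)]
    omega
  rcases le_or_gt 2 a with ha | ha
  · rw [rank_matCt_submatrix_of_two_le hc ha]
    omega
  obtain rfl | rfl : a = 0 ∨ b = n + 1 := by omega
  · rw [rank_matCt_submatrix_of_eq_zero hc rfl (by omega)]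
    omega
  · rw [rank_matCt_submatrix_of_le_two hc (by omega) (by omega)]
    omega
end

section
/- Let R_0 be a commutative Noetherian domain, S = R_0[U_1,...,U_s] graded with deg U_i = 1, and let f ∈ S be a nonzero homogeneous polynomial of degree δ. For each d ≥ s, the matrix M(f;d) over R_0 representing multiplication by f from the degree −(d+δ) component to the degree −d component of the module of inverse polynomials R_0[U_1^−,...,U_s^−] (with respect to the monomial bases) has maximal rank, namely rank C(d−1, s−1). -/
/-!
Order the exponents lexicographically and let `α` be the lex-largest exponent of `f`. Sending a
row index `ρ` to the column index `ρ + α` picks a square submatrix of `M(f;d)` whose diagonal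
entries all equal the leading coefficient `c` of `f`. An entry `(ρ, σ + α)` is the coefficient of
`U^β` with `β + ρ = α + σ`; since `β ≤ α` lexicographically and the lex order is compatible with
addition, it vanishes unless `σ ≤ ρ`. So the submatrix is lower triangular with determinant
`c ^ N ≠ 0`. The rank `N = C(d-1, s-1)` is stars and bars.
-/

open MvPolynomial

noncomputable section

/-- Index type for the monomial basis of the degree `-d` component of the module of
inverse polynomials `R₀[U₁⁻, …, U_s⁻]`: a basis monomial `U^{-λ}` with all `λᵢ ≥ 1` and
`∑ λᵢ = d` is encoded by the tuple `μ = λ - 1`, i.e. a tuple `μ : Fin s → ℕ` with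
`∑ μᵢ = d - s`. -/
def InvBasis (s d : ℕ) : Type :=
  {μ : Fin s → ℕ // μ ∈ Finset.Nat.antidiagonalTuple s (d - s)}

instance (s d : ℕ) : DecidableEq (InvBasis s d) :=
  inferInstanceAs (DecidableEq {μ : Fin s → ℕ // μ ∈ Finset.Nat.antidiagonalTuple s (d - s)})

instance (s d : ℕ) : Fintype (InvBasis s d) :=
  inferInstanceAs (Fintype {μ : Fin s → ℕ // μ ∈ Finset.Nat.antidiagonalTuple s (d - s)})

/-- The matrix `M(f;d)` of multiplication by the polynomial `f` (homogeneous of degree `δ`)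
from the degree `-(d+δ)` component to the degree `-d` component of the module of inverse
polynomials, with respect to the monomial bases.  The entry in row `ρ` (encoding the
exponent tuple `ρ + 1`) and column `μ` (encoding `μ + 1`) is the coefficient of
`U^{(μ+1)-(ρ+1)} = U^{μ-ρ}` in `f` when `ρ ≤ μ` componentwise, and `0` otherwise. -/
def invMulMatrix {R₀ : Type*} [CommRing R₀] (s : ℕ) (f : MvPolynomial (Fin s) R₀)
    (δ d : ℕ) : Matrix (InvBasis s d) (InvBasis s (d + δ)) R₀ :=
  fun ρ μ =>
    if ∀ i, ρ.1 i ≤ μ.1 i then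
      MvPolynomial.coeff (Finsupp.equivFunOnFinite.symm fun i => μ.1 i - ρ.1 i) f
    else 0

namespace InvBasis

variable {s d : ℕ}

def exp (ρ : InvBasis s d) : Fin s →₀ ℕ := Finsupp.equivFunOnFinite.symm ρ.1

@[simp]
lemma exp_apply (ρ : InvBasis s d) (i : Fin s) : ρ.exp i = ρ.1 i := rfl

lemma exp_injective : Function.Injective (exp : InvBasis s d → Fin s →₀ ℕ) :=
  fun _ _ h => Subtype.ext (Finsupp.equivFunOnFinite.symm.injective h)

lemma degree_exp (ρ : InvBasis s d) : ρ.exp.degree = d - s := by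
  rw [Finsupp.degree_eq_sum]
  exact Finset.Nat.mem_antidiagonalTuple.mp ρ.2

instance : LinearOrder (InvBasis s d) :=
  LinearOrder.lift' (fun ρ => toLex ρ.exp) (toLex.injective.comp exp_injective)

lemma lt_iff_toLex_exp_lt {ρ σ : InvBasis s d} : ρ < σ ↔ toLex ρ.exp < toLex σ.exp := Iff.rfl

def equivSym : InvBasis s d ≃ Sym (Fin s) (d - s) :=
  (Equiv.subtypeEquivRight fun _ => Finset.Nat.mem_antidiagonalTuple).trans
    (Sym.equivNatSumOfFintype (Fin s) (d - s)).symm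

lemma card_eq_choose (hs : 1 ≤ s) (hd : s ≤ d) :
    Fintype.card (InvBasis s d) = (d - 1).choose (s - 1) := by
  rw [Fintype.card_congr equivSym, Sym.card_sym_eq_choose, Fintype.card_fin,
    show s + (d - s) - 1 = d - 1 by omega, show d - s = d - 1 - (s - 1) by omega,
    Nat.choose_symm (by omega)]

variable {δ : ℕ} {α : Fin s →₀ ℕ}

def shift (hα : α.degree = δ) (hd : s ≤ d) (ρ : InvBasis s d) : InvBasis s (d + δ) :=
  ⟨⇑(ρ.exp + α), by
    rw [Finset.Nat.mem_antidiagonalTuple, ← Finsupp.degree_eq_sum, map_add, degree_exp, hα]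
    omega⟩

variable (hα : α.degree = δ) (hd : s ≤ d)

@[simp]
lemma exp_shift (ρ : InvBasis s d) : (shift hα hd ρ).exp = ρ.exp + α :=
  Finsupp.ext fun _ => rfl

lemma shift_injective : Function.Injective (shift hα hd) := fun ρ σ h =>
  exp_injective (by simpa using congrArg exp h)

end InvBasis

open InvBasis

lemma invMulMatrix_apply {R₀ : Type*} [CommRing R₀] {s δ d : ℕ} (f : MvPolynomial (Fin s) R₀)
    (ρ : InvBasis s d) (μ : InvBasis s (d + δ)) :
    invMulMatrix s f δ d ρ μ = if ρ.exp ≤ μ.exp then coeff (μ.exp - ρ.exp) f else 0 := by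
  simp only [invMulMatrix, Finsupp.le_def, exp_apply]
  congr 2
  ext i
  simp

section LeadingExponent

variable {R₀ : Type*} [CommRing R₀] {s δ d : ℕ} {f : MvPolynomial (Fin s) R₀}
  {α : Fin s →₀ ℕ} (hα : α.degree = δ) (hd : s ≤ d)

lemma invMulMatrix_shift_self (ρ : InvBasis s d) :
    invMulMatrix s f δ d ρ (shift hα hd ρ) = coeff α f := by
  rw [invMulMatrix_apply, exp_shift, if_pos le_self_add, add_tsub_cancel_left]

lemma isLowerTriangular_submatrix_shift (hmax : ∀ β ∈ f.support, toLex β ≤ toLex α) :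
    ((invMulMatrix s f δ d).submatrix id (shift hα hd)).IsLowerTriangular := by
  intro ρ σ hρσ
  change ρ < σ at hρσ
  rw [Matrix.submatrix_apply, id, invMulMatrix_apply, exp_shift]
  split_ifs with hle
  · by_contra hc
    have hβ := hmax _ (mem_support_iff.mpr hc)
    have hsum : σ.exp + α - ρ.exp + ρ.exp = α + σ.exp := by
      rw [tsub_add_cancel_of_le hle, add_comm]
    have hlex : toLex α + toLex σ.exp ≤ toLex α + toLex ρ.exp := by
      calc toLex α + toLex σ.exp = toLex (σ.exp + α - ρ.exp) + toLex ρ.exp := by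
            rw [← toLex_add, ← toLex_add, hsum]
        _ ≤ toLex α + toLex ρ.exp := add_le_add_left hβ _
    exact (lt_iff_toLex_exp_lt.mp hρσ).not_ge (le_of_add_le_add_left hlex)
  · rfl

lemma det_submatrix_shift (hmax : ∀ β ∈ f.support, toLex β ≤ toLex α) :
    ((invMulMatrix s f δ d).submatrix id (shift hα hd)).det =
      coeff α f ^ Fintype.card (InvBasis s d) := by
  rw [Matrix.det_of_isLowerTriangular _ (isLowerTriangular_submatrix_shift hα hd hmax)]
  simp only [Matrix.submatrix_apply, id, invMulMatrix_shift_self, Finset.prod_const,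
    Finset.card_univ]

end LeadingExponent

theorem stmt_15_general {R₀ : Type*} [CommRing R₀] [IsDomain R₀]
    (s : ℕ) (hs : 1 ≤ s) (f : MvPolynomial (Fin s) R₀) (hf : f ≠ 0)
    (δ : ℕ) (hhom : f.IsHomogeneous δ) (d : ℕ) (hd : s ≤ d) :
    (∃ g : InvBasis s d → InvBasis s (d + δ), Function.Injective g ∧
        ((invMulMatrix s f δ d).submatrix id g).det ≠ 0) ∧
      Fintype.card (InvBasis s d) = (d - 1).choose (s - 1) := by
  obtain ⟨α, hαf, hmax⟩ :=
    Finset.exists_max_image f.support (fun β => toLex β) (support_nonempty.mpr hf)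
  have hcoeff : coeff α f ≠ 0 := mem_support_iff.mp hαf
  have hα : α.degree = δ := by
    by_contra h
    exact hcoeff (hhom.coeff_eq_zero h)
  refine ⟨⟨shift hα hd, shift_injective hα hd, ?_⟩, card_eq_choose hs hd⟩
  rw [det_submatrix_shift hα hd hmax]
  exact pow_ne_zero _ hcoeff

theorem stmt_15 {R₀ : Type*} [CommRing R₀] [IsDomain R₀] [IsNoetherianRing R₀]
    (s : ℕ) (hs : 1 ≤ s) (f : MvPolynomial (Fin s) R₀) (hf : f ≠ 0)
    (δ : ℕ) (hhom : f.IsHomogeneous δ) (d : ℕ) (hd : s ≤ d) :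
    (∃ g : InvBasis s d → InvBasis s (d + δ), Function.Injective g ∧
        ((invMulMatrix s f δ d).submatrix id g).det ≠ 0) ∧
      Fintype.card (InvBasis s d) = (d - 1).choose (s - 1) :=
  stmt_15_general s hs f hf δ hhom d hd

end
end

section
/- Let R_0 be a commutative Noetherian domain and let M be the cokernel of a p × q matrix A (p ≤ q) over R_0 of maximal rank p such that every entry of A lies in an ideal c of R_0 and c is contained in the radical of the ideal of p × p minors of A. Then M = 0 if and only if c = R_0, and every associated prime of M contains c. -/
/-! Cramer's rule: for a maximal minor `δ = det B` of `A`, `δ • v = B *ᵥ (adj B *ᵥ v)` lies in the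
column space of `A`, so the maximal minors annihilate `M` and `c ⊆ √(ann M)`. The radical of the
annihilator lies in every associated prime, and equals `R₀` when `c = R₀`, forcing `M = 0`.
Conversely, if `M = 0` every unit vector is a combination of columns of `A`, whose coordinates
lie in `c`, so `1 ∈ c`. -/

/-- The set of maximal (`p × p`) minors of a `p × q` matrix. -/
def maxMinors {R₀ : Type*} [CommRing R₀] {p q : ℕ} (A : Matrix (Fin p) (Fin q) R₀) :
    Set R₀ :=
  {x | ∃ g : Fin p → Fin q, Function.Injective g ∧ (A.submatrix id g).det = x}

namespace Matrix

variable {R l m n : Type*} [CommRing R] [Fintype m] [Fintype n]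

theorem det_smul_mem_range_mulVecLin [DecidableEq m] (B : Matrix m m R) (v : m → R) :
    B.det • v ∈ LinearMap.range B.mulVecLin :=
  ⟨B.adjugate *ᵥ v, by simp [mulVec_mulVec, mul_adjugate, smul_mulVec]⟩

theorem range_mulVecLin_submatrix_le [DecidableEq n] (A : Matrix l n R) (g : m → n) :
    LinearMap.range (A.submatrix id g).mulVecLin ≤ LinearMap.range A.mulVecLin := by
  have hsub : A.submatrix id g = A * (1 : Matrix n n R).submatrix id g := by
    simpa using submatrix_mul A (1 : Matrix n n R) id id g Function.bijective_id
  rw [hsub, mulVecLin_mul]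
  exact LinearMap.range_comp_le_range _ _

theorem det_submatrix_smul_mem_range_mulVecLin [DecidableEq m] [DecidableEq n]
    (A : Matrix m n R) (g : m → n) (v : m → R) :
    (A.submatrix id g).det • v ∈ LinearMap.range A.mulVecLin :=
  range_mulVecLin_submatrix_le A g (det_smul_mem_range_mulVecLin _ v)

theorem range_mulVecLin_le_pi {c : Ideal R} {A : Matrix l n R} (hA : ∀ i j, A i j ∈ c) :
    LinearMap.range A.mulVecLin ≤ Submodule.pi Set.univ fun _ ↦ c := by
  rintro _ ⟨v, rfl⟩ i -
  exact Ideal.sum_mem c fun j _ ↦ Ideal.mul_mem_right _ c (hA i j)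

theorem eq_top_of_subsingleton_cokernel [Nonempty l] [DecidableEq l] {c : Ideal R}
    {A : Matrix l n R} (hA : ∀ i j, A i j ∈ c)
    (h : Subsingleton ((l → R) ⧸ LinearMap.range A.mulVecLin)) : c = ⊤ := by
  obtain ⟨i⟩ := ‹Nonempty l›
  rw [Submodule.Quotient.subsingleton_iff] at h
  have hsingle : Pi.single i 1 ∈ LinearMap.range A.mulVecLin := h ▸ Submodule.mem_top
  exact c.eq_top_of_isUnit_mem (by simpa using range_mulVecLin_le_pi hA hsingle i trivial)
    isUnit_one

end Matrix

theorem span_maxMinors_le_annihilator {R : Type*} [CommRing R] {p q : ℕ}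
    (A : Matrix (Fin p) (Fin q) R) :
    Ideal.span (maxMinors A) ≤
      Module.annihilator R ((Fin p → R) ⧸ LinearMap.range A.mulVecLin) := by
  rw [Ideal.span_le, Submodule.annihilator_quotient]
  rintro _ ⟨g, -, rfl⟩
  exact Submodule.mem_colon.mpr fun v _ ↦ A.det_submatrix_smul_mem_range_mulVecLin g v

theorem IsAssociatedPrime.le_of_le_radical_annihilator {R M : Type*} [CommRing R]
    [AddCommGroup M] [Module R M] {P c : Ideal R} (hP : IsAssociatedPrime P M)
    (hc : c ≤ (Module.annihilator R M).radical) : c ≤ P := by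
  rw [← Submodule.annihilator_top] at hc
  exact hc.trans (hP.1.radical_le_iff.mpr hP.annihilator_le)

theorem stmt_17_general {R₀ : Type*} [CommRing R₀]
    (p q : ℕ) (hp : 0 < p) (A : Matrix (Fin p) (Fin q) R₀)
    (c : Ideal R₀) (hentries : ∀ i j, A i j ∈ c)
    (hc : c ≤ (Ideal.span (maxMinors A)).radical) :
    (Subsingleton ((Fin p → R₀) ⧸ LinearMap.range A.mulVecLin) ↔ c = ⊤) ∧
      ∀ P ∈ associatedPrimes R₀ ((Fin p → R₀) ⧸ LinearMap.range A.mulVecLin),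
        c ≤ P := by
  have : Nonempty (Fin p) := Fin.pos_iff_nonempty.mp hp
  have hc_ann := hc.trans (Ideal.radical_mono (span_maxMinors_le_annihilator A))
  refine ⟨⟨A.eq_top_of_subsingleton_cokernel hentries, fun hc_top ↦ ?_⟩,
    fun P hP ↦ hP.le_of_le_radical_annihilator hc_ann⟩
  rw [← Module.annihilator_eq_top_iff (R := R₀), ← Ideal.radical_eq_top, eq_top_iff, ← hc_top]
  exact hc_ann

theorem stmt_17 {R₀ : Type*} [CommRing R₀] [IsDomain R₀] [IsNoetherianRing R₀]
    (p q : ℕ) (hp : 0 < p) (hpq : p ≤ q) (A : Matrix (Fin p) (Fin q) R₀)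
    (hrank : ∃ g : Fin p → Fin q, Function.Injective g ∧ (A.submatrix id g).det ≠ 0)
    (c : Ideal R₀) (hentries : ∀ i j, A i j ∈ c)
    (hc : c ≤ (Ideal.span (maxMinors A)).radical) :
    (Subsingleton ((Fin p → R₀) ⧸ LinearMap.range A.mulVecLin) ↔ c = ⊤) ∧
      ∀ P ∈ associatedPrimes R₀ ((Fin p → R₀) ⧸ LinearMap.range A.mulVecLin),
        c ≤ P :=
  stmt_17_general p q hp A c hentries hc
end
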